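/- Fix τ̄ ∈ (0,π/2) and let l_τ̄(ω) = arccos √(sin²ω − √2·tan(τ̄)·sin ω·cos ω) on (arctan(√2·tan τ̄), π/2). Then the function ω ↦ sin(2·l_τ̄(ω)) / (√2·E(l_τ̄(ω),ω)) is strictly increasing on this domain; equivalently, the spherical distance d_τ̄(ω) = arccos( sin(2·l_τ̄(ω)) / (√2·E(l_τ̄(ω),ω)) ) from the midpoint x_{l_τ̄(ω),ω} to k is strictly decreasing in ω. -/
import Mathlib


open Real

/-- The function `l_τ̄(ω) = arccos √(sin²ω − √2·tan τ̄·sin ω·cos ω)` parameterizing the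
level curve `τ = τ̄` of the angle function. -/
noncomputable def ltau (τ ω : ℝ) : ℝ :=
  Real.arccos
    (Real.sqrt (Real.sin ω ^ 2 - Real.sqrt 2 * Real.tan τ * Real.sin ω * Real.cos ω))

/-- `E(l,ω) = √((cos²l + sin²ω)(sin²l + cos²ω))`. -/
noncomputable def Efun (l ω : ℝ) : ℝ :=
  Real.sqrt ((Real.cos l ^ 2 + Real.sin ω ^ 2) * (Real.sin l ^ 2 + Real.cos ω ^ 2))

noncomputable def Nfun (c ω : ℝ) : ℝ :=
  (1 - c ^ 2) * (2 * Real.sin ω * Real.cos ω) -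
    2 * c * (Real.cos ω ^ 2 - Real.sin ω ^ 2)

noncomputable def Dfun (c ω : ℝ) : ℝ :=
  (2 - c ^ 2 / 2) * (2 * Real.sin ω * Real.cos ω) -
    2 * c * (Real.cos ω ^ 2 - Real.sin ω ^ 2)

lemma stmt14_aux (τ ω : ℝ) (hτ0 : 0 < τ) (hτ1 : τ < π / 2)
    (hω1 : Real.arctan (Real.sqrt 2 * Real.tan τ) < ω) (hω2 : ω < π / 2) :
    0 ≤ Real.sin (2 * ltau τ ω) / (Real.sqrt 2 * Efun (ltau τ ω) ω) ∧
    (Real.sin (2 * ltau τ ω) / (Real.sqrt 2 * Efun (ltau τ ω) ω)) ^ 2 =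
      Nfun (Real.sqrt 2 * Real.tan τ) ω / Dfun (Real.sqrt 2 * Real.tan τ) ω ∧
    0 < Dfun (Real.sqrt 2 * Real.tan τ) ω ∧
    Real.sin (2 * ltau τ ω) / (Real.sqrt 2 * Efun (ltau τ ω) ω) < 1 := by
  set c : ℝ := Real.sqrt 2 * Real.tan τ with hc_def
  have hc : 0 < c := mul_pos (Real.sqrt_pos.2 two_pos)
    (Real.tan_pos_of_pos_of_lt_pi_div_two hτ0 hτ1)
  have harct : (0 : ℝ) < Real.arctan c := by
    rw [← Real.arctan_zero]; exact Real.arctan_strictMono hc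
  have hω0 : 0 < ω := harct.trans hω1
  have hcos : 0 < Real.cos ω :=
    Real.cos_pos_of_mem_Ioo ⟨by linarith, hω2⟩
  have hsin : 0 < Real.sin ω := Real.sin_pos_of_pos_of_lt_pi hω0
    (by linarith [Real.pi_pos])
  have htan : c < Real.tan ω := by
    rw [← Real.tan_arctan c]
    exact Real.tan_lt_tan_of_nonneg_of_lt_pi_div_two harct.le hω2 hω1
  have hpq : Real.sin ω ^ 2 + Real.cos ω ^ 2 = 1 := Real.sin_sq_add_cos_sq ω
  set s : ℝ := Real.sin ω ^ 2 - c * Real.sin ω * Real.cos ω with hs_def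
  have hs0 : 0 < s := by
    have h1 : s = Real.sin ω * Real.cos ω * (Real.tan ω - c) := by
      rw [hs_def, Real.tan_eq_sin_div_cos]
      field_simp
    rw [h1]
    exact mul_pos (mul_pos hsin hcos) (sub_pos.2 htan)
  have hs1 : s < 1 := by
    have := mul_pos (mul_pos hc hsin) hcos
    nlinarith [sq_nonneg (Real.cos ω)]
  have hl_def : ltau τ ω = Real.arccos (Real.sqrt s) := by
    rw [ltau, hs_def, hc_def]
  have hl_cos : Real.cos (ltau τ ω) = Real.sqrt s := by
    rw [hl_def]
    exact Real.cos_arccos (le_trans (by norm_num) (Real.sqrt_nonneg s))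
      (Real.sqrt_le_one.2 hs1.le)
  have hl_cos2 : Real.cos (ltau τ ω) ^ 2 = s := by
    rw [hl_cos, Real.sq_sqrt hs0.le]
  have hl_sin : Real.sin (ltau τ ω) = Real.sqrt (1 - s) := by
    rw [hl_def, Real.sin_arccos, Real.sq_sqrt hs0.le]
  have hl_sin2 : Real.sin (ltau τ ω) ^ 2 = 1 - s := by
    rw [hl_sin, Real.sq_sqrt (by linarith)]
  have hfac1 : 0 < Real.cos (ltau τ ω) ^ 2 + Real.sin ω ^ 2 := by
    have h1 := sq_nonneg (Real.cos (ltau τ ω))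
    nlinarith [hsin]
  have hfac2 : 0 < Real.sin (ltau τ ω) ^ 2 + Real.cos ω ^ 2 := by
    have h1 := sq_nonneg (Real.sin (ltau τ ω))
    nlinarith [hcos]
  have hEpos : 0 < Efun (ltau τ ω) ω := Real.sqrt_pos.2 (mul_pos hfac1 hfac2)
  have hE2 : Efun (ltau τ ω) ω ^ 2 = (s + Real.sin ω ^ 2) * (1 - s + Real.cos ω ^ 2) := by
    rw [Efun, Real.sq_sqrt (mul_pos hfac1 hfac2).le, hl_cos2, hl_sin2]
  have hsin2l : Real.sin (2 * ltau τ ω) = 2 * Real.sqrt (1 - s) * Real.sqrt s := by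
    rw [Real.sin_two_mul, hl_sin, hl_cos]
  set F : ℝ := Real.sin (2 * ltau τ ω) / (Real.sqrt 2 * Efun (ltau τ ω) ω) with hF_def
  have hF0 : 0 ≤ F := by
    rw [hF_def, hsin2l]
    positivity
  have hsin2ω : 0 < Real.sin ω * Real.cos ω := mul_pos hsin hcos
  have hI1 : 4 * s * (1 - s) = (2 * Real.sin ω * Real.cos ω) * Nfun c ω := by
    rw [hs_def, Nfun]
    linear_combination (-4 * Real.sin ω ^ 2 + 4 * c * Real.sin ω * Real.cos ω) * hpq
  have hI2 : 2 * ((s + Real.sin ω ^ 2) * (1 - s + Real.cos ω ^ 2)) =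
      (2 * Real.sin ω * Real.cos ω) * Dfun c ω := by
    rw [hs_def, Dfun]
    linear_combination (-4 * Real.sin ω ^ 2 + 2 * c * Real.sin ω * Real.cos ω) * hpq
  have hA : 0 < s + Real.sin ω ^ 2 := by
    have := sq_nonneg (Real.sin ω); linarith
  have hB : 0 < 1 - s + Real.cos ω ^ 2 := by
    have := sq_nonneg (Real.cos ω); linarith
  have hD : 0 < Dfun c ω := by
    have hLHS : 0 < 2 * ((s + Real.sin ω ^ 2) * (1 - s + Real.cos ω ^ 2)) := by
      have := mul_pos hA hB; linarith
    rw [hI2] at hLHS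
    rcases mul_pos_iff.mp hLHS with ⟨_, h2⟩ | ⟨h1, _⟩
    · exact h2
    · linarith [hsin2ω]
  have hN : 0 < Nfun c ω := by
    have hLHS : 0 < 4 * s * (1 - s) := by
      have : 0 < s * (1 - s) := mul_pos hs0 (by linarith); linarith
    rw [hI1] at hLHS
    rcases mul_pos_iff.mp hLHS with ⟨_, h2⟩ | ⟨h1, _⟩
    · exact h2
    · linarith [hsin2ω]
  have hF2 : F ^ 2 = Nfun c ω / Dfun c ω := by
    have hden : (Real.sqrt 2 * Efun (ltau τ ω) ω) ^ 2 =
        2 * ((s + Real.sin ω ^ 2) * (1 - s + Real.cos ω ^ 2)) := by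
      rw [mul_pow, Real.sq_sqrt (by norm_num : (0:ℝ) ≤ 2), hE2]
    have hnum : Real.sin (2 * ltau τ ω) ^ 2 = 4 * s * (1 - s) := by
      rw [hsin2l, show (2 * Real.sqrt (1 - s) * Real.sqrt s) ^ 2 =
        4 * (Real.sqrt (1 - s) ^ 2 * Real.sqrt s ^ 2) from by ring,
        Real.sq_sqrt hs0.le, Real.sq_sqrt (by linarith : (0:ℝ) ≤ 1 - s)]
      ring
    have hFsq : F ^ 2 = (4 * s * (1 - s)) /
        (2 * ((s + Real.sin ω ^ 2) * (1 - s + Real.cos ω ^ 2))) := by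
      rw [hF_def, div_pow, hden, hnum]
    rw [hFsq, hI1, hI2, mul_div_mul_left _ _ (by positivity)]
  have hND : Nfun c ω < Dfun c ω := by
    have hdiff : Dfun c ω - Nfun c ω = (1 + c ^ 2 / 2) * (2 * Real.sin ω * Real.cos ω) := by
      rw [Nfun, Dfun]; ring
    have hpos : 0 < (1 + c ^ 2 / 2) * (2 * Real.sin ω * Real.cos ω) :=
      mul_pos (by positivity) (by linarith)
    linarith [hdiff, hpos]
  have hF1 : F < 1 := by
    have : F ^ 2 < 1 ^ 2 := by
      rw [hF2, one_pow, div_lt_one hD]; exact hND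
    exact lt_of_pow_lt_pow_left₀ 2 zero_le_one this
  exact ⟨hF0, hF2, hD, hF1⟩

/-- for `τ̄ ∈ (0,π/2)`, `ω ↦ sin(2 l_τ̄(ω))/(√2·E(l_τ̄(ω),ω))` is strictly
increasing on `(arctan(√2 tan τ̄), π/2)`; equivalently, the spherical distance
`d_τ̄(ω) = arccos(sin(2 l_τ̄(ω))/(√2·E(l_τ̄(ω),ω)))` from `x_{l_τ̄(ω),ω}` to `k`
is strictly decreasing in `ω`. -/
theorem stmt14 (τ : ℝ) (hτ : τ ∈ Set.Ioo 0 (π/2)) :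
    StrictMonoOn
      (fun ω => Real.sin (2 * ltau τ ω) / (Real.sqrt 2 * Efun (ltau τ ω) ω))
      (Set.Ioo (Real.arctan (Real.sqrt 2 * Real.tan τ)) (π/2)) ∧
    StrictAntiOn
      (fun ω => Real.arccos (Real.sin (2 * ltau τ ω) / (Real.sqrt 2 * Efun (ltau τ ω) ω)))
      (Set.Ioo (Real.arctan (Real.sqrt 2 * Real.tan τ)) (π/2)) := by
  obtain ⟨hτ0, hτ1⟩ := hτ
  set c : ℝ := Real.sqrt 2 * Real.tan τ with hc_def
  have hc : 0 < c := mul_pos (Real.sqrt_pos.2 two_pos)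
    (Real.tan_pos_of_pos_of_lt_pi_div_two hτ0 hτ1)
  have harct : (0 : ℝ) < Real.arctan c := by
    rw [← Real.arctan_zero]; exact Real.arctan_strictMono hc
  have key : ∀ a ∈ Set.Ioo (Real.arctan c) (π/2), ∀ b ∈ Set.Ioo (Real.arctan c) (π/2),
      a < b →
      Real.sin (2 * ltau τ a) / (Real.sqrt 2 * Efun (ltau τ a) a) <
      Real.sin (2 * ltau τ b) / (Real.sqrt 2 * Efun (ltau τ b) b) := by
    intro a ha b hb hab
    obtain ⟨hF0a, hF2a, hDa, _⟩ := stmt14_aux τ a hτ0 hτ1 ha.1 ha.2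
    obtain ⟨hF0b, hF2b, hDb, _⟩ := stmt14_aux τ b hτ0 hτ1 hb.1 hb.2
    refine lt_of_pow_lt_pow_left₀ 2 hF0b ?_
    rw [hF2a, hF2b, div_lt_div_iff₀ hDa hDb]
    have hsd : Real.sin a * Real.cos b - Real.cos a * Real.sin b < 0 := by
      rw [show Real.sin a * Real.cos b - Real.cos a * Real.sin b = Real.sin (a - b) by
        rw [Real.sin_sub]]
      refine Real.sin_neg_of_neg_of_neg_pi_lt (by linarith) ?_
      have ha0 : 0 < a := harct.trans ha.1
      have hb2 : b < π / 2 := hb.2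
      linarith [Real.pi_pos]
    have hiden : Nfun c a * Dfun c b - Nfun c b * Dfun c a =
        (2 * c + c ^ 3) * ((2 * Real.sin a * Real.cos a) * (Real.cos b ^ 2 - Real.sin b ^ 2)
          - (2 * Real.sin b * Real.cos b) * (Real.cos a ^ 2 - Real.sin a ^ 2)) := by
      rw [Nfun, Nfun, Dfun, Dfun]; ring
    have htrig : (2 * Real.sin a * Real.cos a) * (Real.cos b ^ 2 - Real.sin b ^ 2)
        - (2 * Real.sin b * Real.cos b) * (Real.cos a ^ 2 - Real.sin a ^ 2) =
        Real.sin (2 * a - 2 * b) := by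
      rw [Real.sin_sub, Real.sin_two_mul, Real.sin_two_mul, Real.cos_two_mul',
        Real.cos_two_mul']
      ring
    have hsin2ab : Real.sin (2 * a - 2 * b) < 0 := by
      refine Real.sin_neg_of_neg_of_neg_pi_lt (by linarith) ?_
      have ha0 : 0 < a := harct.trans ha.1
      linarith [hb.2]
    have hcpos : 0 < 2 * c + c ^ 3 := by positivity
    have hX : (2 * Real.sin a * Real.cos a) * (Real.cos b ^ 2 - Real.sin b ^ 2)
        - (2 * Real.sin b * Real.cos b) * (Real.cos a ^ 2 - Real.sin a ^ 2) < 0 := by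
      rw [htrig]; exact hsin2ab
    linarith [mul_neg_of_pos_of_neg hcpos hX, hiden.le, hiden.ge]
  refine ⟨fun a ha b hb hab => key a ha b hb hab, fun a ha b hb hab => ?_⟩
  obtain ⟨hF0a, _, _, hF1a⟩ := stmt14_aux τ a hτ0 hτ1 ha.1 ha.2
  obtain ⟨hF0b, _, _, hF1b⟩ := stmt14_aux τ b hτ0 hτ1 hb.1 hb.2
  exact Real.strictAntiOn_arccos ⟨by linarith, hF1a.le⟩ ⟨by linarith, hF1b.le⟩
    (key a ha b hb hab)
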